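/- arXiv:2509.02239 — 4 statements merged into one kernel-verified Lean document; each statement's English description precedes it below -/
import Mathlib

section
/- Let C ⊆ ℝⁿ be a nonempty open convex cone and let x ∈ C. Then the function y ↦ exp(−⟨x, y⟩) is Lebesgue-integrable over the closed dual cone {y ∈ ℝⁿ : ⟨y, c⟩ ≥ 0 for all c ∈ C}. -/
open MeasureTheory Real Set

private lemma integrable_exp_neg_mul_abs' {a : ℝ} (ha : 0 < a) :
    Integrable (fun t : ℝ => Real.exp (-a * |t|)) := by
  have hIoi : IntegrableOn (fun t : ℝ => Real.exp (-a * |t|)) (Ioi 0) := by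
    refine (exp_neg_integrableOn_Ioi 0 ha).congr_fun (fun t ht => ?_) measurableSet_Ioi
    rw [abs_of_pos ht]
  have hIic : IntegrableOn (fun t : ℝ => Real.exp (-a * |t|)) (Iic 0) := by
    rw [← Measure.map_neg_eq_self (volume : Measure ℝ)]
    have m : MeasurableEmbedding fun x : ℝ => -x :=
      (Homeomorph.neg ℝ).measurableEmbedding
    rw [m.integrableOn_map_iff]
    simp_rw [Function.comp_def, abs_neg, neg_preimage, neg_Iic, neg_zero]
    exact Iff.mpr integrableOn_Ici_iff_integrableOn_Ioi hIoi
  have := hIic.union hIoi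
  rwa [Iic_union_Ioi, integrableOn_univ] at this

/-- For a nonempty open convex cone `C ⊆ ℝⁿ` and `x ∈ C`, the function
`y ↦ exp(−⟨x, y⟩)` is Lebesgue-integrable over the closed dual cone of `C`. -/
theorem exp_integrable_on_dual_cone {n : ℕ} (C : Set (Fin n → ℝ))
    (hCopen : IsOpen C) (hCconv : Convex ℝ C) (hCne : C.Nonempty)
    (hCcone : ∀ t : ℝ, 0 < t → ∀ x ∈ C, t • x ∈ C)
    (x : Fin n → ℝ) (hx : x ∈ C) :
    IntegrableOn (fun y : Fin n → ℝ => Real.exp (-(∑ i, x i * y i)))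
      {y : Fin n → ℝ | ∀ c ∈ C, 0 ≤ ∑ i, y i * c i} := by
  set S := {y : Fin n → ℝ | ∀ c ∈ C, 0 ≤ ∑ i, y i * c i} with hS
  have hSclosed : IsClosed S := by
    have : S = ⋂ c ∈ C, {y : Fin n → ℝ | 0 ≤ ∑ i, y i * c i} := by
      ext y; simp [hS]
    rw [this]
    refine isClosed_biInter fun c _ => ?_
    exact isClosed_le continuous_const (by fun_prop)
  have hSmeas : MeasurableSet S := hSclosed.measurableSet
  rcases Nat.eq_zero_or_pos n with hn | hn
  · -- trivial case: Fin 0 → ℝ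
    subst hn
    have hprob : IsProbabilityMeasure (volume : Measure (Fin 0 → ℝ)) := by
      constructor
      rw [show (univ : Set (Fin 0 → ℝ)) = Set.pi univ (fun _ => univ) by simp]
      rw [volume_pi_pi]
      simp
    have : (fun y : Fin 0 → ℝ => Real.exp (-(∑ i, x i * y i))) = fun _ => (1 : ℝ) := by
      funext y; simp
    rw [this]
    exact (integrable_const 1).integrableOn
  -- main case
  obtain ⟨ε, hε, hball⟩ := Metric.isOpen_iff.mp hCopen x hx
  have key : ∀ y ∈ S, ∀ i, ε / 2 * |y i| ≤ ∑ i, x i * y i := by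
    intro y hy i
    set s : ℝ := if 0 ≤ y i then 1 else -1 with hs
    have hsabs : |s| = 1 := by
      rw [hs]; split <;> simp
    set c : Fin n → ℝ := Function.update x i (x i - ε / 2 * s) with hc
    have hcC : c ∈ C := by
      apply hball
      rw [Metric.mem_ball, dist_pi_lt_iff hε]
      intro j
      rcases eq_or_ne j i with rfl | hj
      · rw [hc, Function.update_self, Real.dist_eq]
        have : x j - ε / 2 * s - x j = -(ε / 2 * s) := by ring
        rw [this, abs_neg, abs_mul, hsabs, mul_one, abs_of_pos (by linarith)]
        linarith
      · rw [hc, Function.update_of_ne hj, dist_self]; exact hε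
    have h0 := hy c hcC
    have hyc : ∑ j, y j * c j = (∑ j, y j * x j) - ε / 2 * (y i * s) := by
      have hsplit : ∀ (f : Fin n → ℝ), ∑ j, f j = f i + ∑ j ∈ Finset.univ.erase i, f j :=
        fun f => (Finset.add_sum_erase _ f (Finset.mem_univ i)).symm
      rw [hsplit (fun j => y j * c j), hsplit (fun j => y j * x j)]
      have h1 : ∑ j ∈ Finset.univ.erase i, y j * c j
          = ∑ j ∈ Finset.univ.erase i, y j * x j :=
        Finset.sum_congr rfl fun j hj => by
          rw [hc, Function.update_of_ne (Finset.ne_of_mem_erase hj)]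
      rw [h1, hc, Function.update_self]; ring
    have hys : y i * s = |y i| := by
      rw [hs]; split
      · rw [mul_one, abs_of_nonneg ‹_›]
      · rw [abs_of_neg (lt_of_not_ge ‹_›)]; ring
    rw [hyc, hys] at h0
    have hsum : ∑ j, y j * x j = ∑ j, x j * y j := by
      congr 1; ext j; ring
    rw [hsum] at h0
    linarith
  set a : ℝ := ε / 2 / n with ha
  have ha0 : 0 < a := by positivity
  have key2 : ∀ y ∈ S, a * ∑ i, |y i| ≤ ∑ i, x i * y i := by
    intro y hy
    have : a * ∑ i, |y i| = ∑ i : Fin n, (1 / n : ℝ) * (ε / 2 * |y i|) := by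
      rw [Finset.mul_sum]
      congr 1; ext i
      rw [ha]; ring
    rw [this]
    calc ∑ i : Fin n, (1 / n : ℝ) * (ε / 2 * |y i|)
        ≤ ∑ i : Fin n, (1 / n : ℝ) * (∑ j, x j * y j) := by
          refine Finset.sum_le_sum fun i _ => ?_
          exact mul_le_mul_of_nonneg_left (key y hy i) (by positivity)
      _ = ∑ j, x j * y j := by
          rw [Finset.sum_const, Finset.card_univ, Fintype.card_fin, nsmul_eq_mul]
          have hn' : (n:ℝ) ≠ 0 := Nat.cast_ne_zero.mpr hn.ne'
          field_simp
  -- dominating function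
  have hg : Integrable (fun y : Fin n → ℝ => ∏ i, Real.exp (-a * |y i|)) := by
    exact Integrable.fintype_prod fun i => integrable_exp_neg_mul_abs' ha0
  refine Integrable.mono hg.integrableOn ?_ ?_
  · exact (Continuous.aestronglyMeasurable (by fun_prop)).restrict
  · rw [ae_restrict_iff' hSmeas]
    filter_upwards with y hy
    have h1 : (0:ℝ) < ∏ i, Real.exp (-a * |y i|) := Finset.prod_pos fun i _ => Real.exp_pos _
    rw [Real.norm_eq_abs, Real.norm_eq_abs, Real.abs_exp, abs_of_pos h1]
    have : ∏ i, Real.exp (-a * |y i|) = Real.exp (∑ i, -a * |y i|) := by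
      rw [Real.exp_sum]
    rw [this]
    apply Real.exp_le_exp.mpr
    have h2 := key2 y hy
    have h3 : ∑ i, -a * |y i| = -(a * ∑ i, |y i|) := by
      rw [Finset.mul_sum, ← Finset.sum_neg_distrib]
      congr 1; ext i; ring
    rw [h3]
    linarith
end

section
/- Let a < b be real numbers and let x = (x₁, x₂) ∈ ℝ² satisfy a·x₂ < x₁ < b·x₂. Then ∫_{D} exp(−(x₁y₁ + x₂y₂)) dy₁ dy₂ = (b − a) / ((x₁ − a·x₂)(b·x₂ − x₁)), where D = {(y₁, y₂) ∈ ℝ² : a·y₁ + y₂ > 0 and b·y₁ + y₂ > 0} and the integral is with respect to Lebesgue measure on ℝ². -/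
open MeasureTheory Real Set

private lemma exp_int_Ioi' {r : ℝ} (hr : 0 < r) (c : ℝ) :
    ∫ x in Ioi c, Real.exp (-(r * x)) = Real.exp (-(r * c)) / r := by
  have h := integral_comp_mul_left_Ioi (fun x => Real.exp (-x)) c hr
  simp only [smul_eq_mul] at h
  rw [h, integral_exp_neg_Ioi, div_eq_inv_mul]

private lemma exp_lint_Ioi' {r : ℝ} (hr : 0 < r) (c : ℝ) :
    ∫⁻ x in Ioi c, ENNReal.ofReal (Real.exp (-(r * x))) =
      ENNReal.ofReal (Real.exp (-(r * c)) / r) := by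
  rw [← exp_int_Ioi' hr c, ← ofReal_integral_eq_lintegral_ofReal]
  · have := exp_neg_integrableOn_Ioi c hr; simp only [neg_mul] at this; exact this
  · exact Filter.Eventually.of_forall fun x => (Real.exp_pos _).le

private lemma exp_int_Iic' {r : ℝ} (hr : 0 < r) (c : ℝ) :
    ∫ x in Iic c, Real.exp (r * x) = Real.exp (r * c) / r := by
  have h := integral_comp_neg_Iic c (fun x => Real.exp (-(r * x)))
  simp only [mul_neg, neg_neg] at h
  rw [h, exp_int_Ioi' hr, mul_neg, neg_neg]

private lemma integrableOn_exp_mul_Iic' {r : ℝ} (hr : 0 < r) (c : ℝ) :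
    IntegrableOn (fun x => Real.exp (r * x)) (Iic c) := by
  rw [← integrable_indicator_iff measurableSet_Iic]
  have h := (integrable_comp_mul_left_iff ((Iic (r * c)).indicator Real.exp) hr.ne').mpr
    ((integrable_indicator_iff measurableSet_Iic).mpr (integrableOn_exp_Iic (r * c)))
  refine h.congr (Filter.Eventually.of_forall fun x => ?_)
  by_cases hx : x ∈ Iic c
  · rw [indicator_of_mem hx]
    exact indicator_of_mem (mem_Iic.mpr (mul_le_mul_of_nonneg_left hx hr.le)) Real.exp
  · rw [indicator_of_notMem hx]
    exact indicator_of_notMem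
      (fun hmem => hx (mem_Iic.mpr (le_of_mul_le_mul_left (mem_Iic.mp hmem) hr))) Real.exp

private lemma exp_lint_Iic' {r : ℝ} (hr : 0 < r) (c : ℝ) :
    ∫⁻ x in Iic c, ENNReal.ofReal (Real.exp (r * x)) =
      ENNReal.ofReal (Real.exp (r * c) / r) := by
  rw [← exp_int_Iic' hr c, ← ofReal_integral_eq_lintegral_ofReal]
  · exact integrableOn_exp_mul_Iic' hr c
  · exact Filter.Eventually.of_forall fun x => (Real.exp_pos _).le

/-- The dual volume representation of the canonical function of the segment `[a,b] ⊂ ℙ¹`: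
for `x` in the open cone over `[a,b]`,
`∫_D exp(−(x₁y₁ + x₂y₂)) dy = (b−a)/((x₁ − a·x₂)(b·x₂ − x₁))`,
where `D = {y | a·y₁ + y₂ > 0, b·y₁ + y₂ > 0}` is the open dual cone. -/
theorem segment_dual_volume (a b x₁ x₂ : ℝ) (hab : a < b)
    (h₁ : a * x₂ < x₁) (h₂ : x₁ < b * x₂) :
    ∫ y in {y : Fin 2 → ℝ | 0 < a * y 0 + y 1 ∧ 0 < b * y 0 + y 1},
        Real.exp (-(x₁ * y 0 + x₂ * y 1))
      = (b - a) / ((x₁ - a * x₂) * (b * x₂ - x₁)) := by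
  have hx2 : 0 < x₂ := by nlinarith
  set α := x₁ - a * x₂ with hα
  set β := b * x₂ - x₁ with hβ
  have hα0 : 0 < α := by rw [hα]; linarith
  have hβ0 : 0 < β := by rw [hβ]; linarith
  set T : Set (ℝ × ℝ) := {p | 0 < a * p.1 + p.2 ∧ 0 < b * p.1 + p.2} with hT
  have hTm : MeasurableSet T :=
    (measurableSet_lt measurable_const ((measurable_fst.const_mul a).add measurable_snd)).inter
      (measurableSet_lt measurable_const ((measurable_fst.const_mul b).add measurable_snd))
  -- Step 1: transfer to ℝ × ℝ
  have step1 : (∫ y in {y : Fin 2 → ℝ | 0 < a * y 0 + y 1 ∧ 0 < b * y 0 + y 1},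
        Real.exp (-(x₁ * y 0 + x₂ * y 1)))
      = ∫ p in T, Real.exp (-(x₁ * p.1 + x₂ * p.2)) := by
    exact (volume_preserving_finTwoArrow ℝ).setIntegral_preimage_emb
      (MeasurableEquiv.measurableEmbedding _)
      (fun p : ℝ × ℝ => Real.exp (-(x₁ * p.1 + x₂ * p.2))) T
  rw [step1]
  set f : ℝ × ℝ → ENNReal := fun p => ENNReal.ofReal (Real.exp (-(x₁ * p.1 + x₂ * p.2)))
    with hf
  have hfm : Measurable f := by fun_prop
  -- Step 2: to lintegral
  have step2 : (∫ p in T, Real.exp (-(x₁ * p.1 + x₂ * p.2)))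
      = (∫⁻ p in T, f p).toReal := by
    rw [integral_eq_lintegral_of_nonneg_ae (f := fun p : ℝ × ℝ => Real.exp (-(x₁ * p.1 + x₂ * p.2)))
      (Filter.Eventually.of_forall fun p => (Real.exp_pos _).le)
      (((measurable_fst.const_mul x₁).add (measurable_snd.const_mul x₂)).neg.exp.aestronglyMeasurable)]
  rw [step2]
  -- Step 3: Fubini
  have step3 : (∫⁻ p in T, f p) = ∫⁻ y₁ : ℝ, ∫⁻ y₂ : ℝ, T.indicator f (y₁, y₂) := by
    rw [← lintegral_indicator hTm, Measure.volume_eq_prod ℝ ℝ]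
    exact lintegral_prod _ (hfm.indicator hTm).aemeasurable
  rw [step3]
  -- Step 4: compute inner integral
  have step4 : ∀ y₁ : ℝ, (∫⁻ y₂ : ℝ, T.indicator f (y₁, y₂))
      = ENNReal.ofReal (Real.exp (-(x₁ * y₁))
          * (Real.exp (-(x₂ * max (-(a * y₁)) (-(b * y₁)))) / x₂)) := by
    intro y₁
    have hset : (fun y₂ => T.indicator f (y₁, y₂))
        = (Ioi (max (-(a * y₁)) (-(b * y₁)))).indicator (fun y₂ => f (y₁, y₂)) := by
      funext y₂
      by_cases h : (y₁, y₂) ∈ T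
      · rw [indicator_of_mem h, indicator_of_mem]
        exact mem_Ioi.mpr (max_lt (by have := h.1; dsimp at this ⊢; linarith)
          (by have := h.2; dsimp at this ⊢; linarith))
      · rw [indicator_of_notMem h, indicator_of_notMem]
        intro hmem
        rw [mem_Ioi, max_lt_iff] at hmem
        exact h ⟨by dsimp; linarith [hmem.1], by dsimp; linarith [hmem.2]⟩
    rw [hset, lintegral_indicator measurableSet_Ioi]
    have hsplit : ∀ y₂ : ℝ, f (y₁, y₂)
        = ENNReal.ofReal (Real.exp (-(x₁ * y₁))) * ENNReal.ofReal (Real.exp (-(x₂ * y₂))) := by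
      intro y₂
      rw [← ENNReal.ofReal_mul (Real.exp_pos _).le, ← Real.exp_add]
      rw [hf]
      ring_nf
    simp_rw [hsplit]
    rw [lintegral_const_mul _ (by fun_prop), exp_lint_Ioi' hx2,
      ← ENNReal.ofReal_mul (Real.exp_pos _).le]
  simp_rw [step4]
  -- Step 5: compute outer integral
  set G : ℝ → ENNReal := fun y₁ => ENNReal.ofReal (Real.exp (-(x₁ * y₁))
      * (Real.exp (-(x₂ * max (-(a * y₁)) (-(b * y₁)))) / x₂)) with hG
  have hsplit : (∫⁻ y₁ : ℝ, G y₁)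
      = (∫⁻ y₁ in Iic (0:ℝ), G y₁) + ∫⁻ y₁ in Ioi (0:ℝ), G y₁ := by
    rw [← compl_Iic]
    exact (lintegral_add_compl G measurableSet_Iic).symm
  rw [hsplit]
  have hIic : (∫⁻ y₁ in Iic (0:ℝ), G y₁) = ENNReal.ofReal (1 / (β * x₂)) := by
    have hcongr : ∀ y₁ ∈ Iic (0:ℝ), G y₁
        = ENNReal.ofReal (Real.exp (β * y₁)) * ENNReal.ofReal x₂⁻¹ := by
      intro y₁ hy₁
      rw [mem_Iic] at hy₁
      have hmax : max (-(a * y₁)) (-(b * y₁)) = -(b * y₁) :=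
        max_eq_right (by nlinarith)
      simp only [hG, hmax]
      rw [← ENNReal.ofReal_mul (show (0:ℝ) ≤ Real.exp (β * y₁) by positivity)]
      congr 1
      rw [div_eq_mul_inv, ← mul_assoc, ← Real.exp_add, hβ]
      ring_nf
    rw [setLIntegral_congr_fun measurableSet_Iic
      hcongr]
    rw [lintegral_mul_const _ (by fun_prop), exp_lint_Iic' hβ0,
      ← ENNReal.ofReal_mul (by positivity)]
    congr 1
    rw [mul_zero, Real.exp_zero]
    field_simp
  have hIoi : (∫⁻ y₁ in Ioi (0:ℝ), G y₁) = ENNReal.ofReal (1 / (α * x₂)) := by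
    have hcongr : ∀ y₁ ∈ Ioi (0:ℝ), G y₁
        = ENNReal.ofReal (Real.exp (-(α * y₁))) * ENNReal.ofReal x₂⁻¹ := by
      intro y₁ hy₁
      rw [mem_Ioi] at hy₁
      have hmax : max (-(a * y₁)) (-(b * y₁)) = -(a * y₁) :=
        max_eq_left (by nlinarith)
      simp only [hG, hmax]
      rw [← ENNReal.ofReal_mul (show (0:ℝ) ≤ Real.exp (-(α * y₁)) by positivity)]
      congr 1
      rw [div_eq_mul_inv, ← mul_assoc, ← Real.exp_add, hα]
      ring_nf
    rw [setLIntegral_congr_fun measurableSet_Ioi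
      hcongr]
    rw [lintegral_mul_const _ (by fun_prop), exp_lint_Ioi' hα0,
      ← ENNReal.ofReal_mul (by positivity)]
    congr 1
    rw [mul_zero, neg_zero, Real.exp_zero]
    field_simp
  rw [hIic, hIoi, ← ENNReal.ofReal_add (by positivity) (by positivity),
    ENNReal.toReal_ofReal (by positivity)]
  field_simp
  ring_nf
  linarith
end

section
/- Let y = (y₁, y₂, y₃) ∈ ℝ³ satisfy y₃ > 0 and y₃² > y₁² + y₂². Set q₁(t, y) = (y₃ − t)² − (y₂ − t)² − y₁² and R(y) = {t ∈ ℝ : 0 < t < y₃ and q₁(t, y) > 0}. Then ∫_{R(y)} dt / (2π·√(q₁(t, y))) = √(y₃² − y₁² − y₂²) / (2π·(y₃ − y₂)). (Note that y₃ − y₂ > 0 under the hypotheses.) -/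
/-!
On the line `x₂ + x₃ = 0` tangent to the cone, the quadratic `q₁(t, y)` degenerates to the affine
function `A - 2 (y₃ - y₂) t` with `A = y₃² - y₁² - y₂²`, so `R(y)` is the interval
`(0, A / (2 (y₃ - y₂)))` and the integral is the elementary `∫ (A - b t)^(-1/2) dt = 2 √A / b`.
-/

open MeasureTheory Real Set

theorem integral_inv_sqrt {a : ℝ} (ha : 0 ≤ a) : ∫ u in (0 : ℝ)..a, (√u)⁻¹ = 2 * √a := by
  have hrpow : ∫ u in (0 : ℝ)..a, (√u)⁻¹ = ∫ u in (0 : ℝ)..a, u ^ (-(1 / 2) : ℝ) := by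
    refine intervalIntegral.integral_congr fun u hu ↦ ?_
    rw [uIcc_of_le ha] at hu
    rw [sqrt_eq_rpow, rpow_neg hu.1]
  rw [hrpow, integral_rpow (by norm_num), zero_rpow (by norm_num), sqrt_eq_rpow]
  norm_num
  ring

theorem integral_inv_sqrt_sub_mul {a b : ℝ} (ha : 0 ≤ a) (hb : b ≠ 0) :
    ∫ t in (0 : ℝ)..a / b, (√(a - b * t))⁻¹ = 2 * √a / b := by
  rw [intervalIntegral.integral_comp_sub_mul (fun u ↦ (√u)⁻¹) hb, mul_div_cancel₀ a hb,
    sub_self, mul_zero, sub_zero, integral_inv_sqrt ha, smul_eq_mul]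
  ring

theorem setIntegral_Ioo_inv_sqrt_sub_mul {a b : ℝ} (ha : 0 ≤ a) (hb : 0 < b) :
    ∫ t in Ioo 0 (a / b), (√(a - b * t))⁻¹ = 2 * √a / b := by
  rw [← integral_Ioc_eq_integral_Ioo, ← intervalIntegral.integral_of_le (by positivity),
    integral_inv_sqrt_sub_mul ha hb.ne']

section TangentCase

variable {y₁ y₂ y₃ : ℝ}

theorem tangent_quadratic_eq (t : ℝ) :
    (y₃ - t) ^ 2 - (y₂ - t) ^ 2 - y₁ ^ 2 = (y₃ ^ 2 - y₁ ^ 2 - y₂ ^ 2) - 2 * (y₃ - y₂) * t := by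
  ring

theorem sub_pos_of_sq_add_sq_lt_sq (hy3 : 0 < y₃) (hy : y₁ ^ 2 + y₂ ^ 2 < y₃ ^ 2) :
    0 < y₃ - y₂ := by
  nlinarith [sq_nonneg y₁, sq_nonneg (y₃ + y₂)]

/-- The constraint `t < y₃` is implied by the other two: the endpoint equals
`(y₃ + y₂) / 2 - y₁² / (2 (y₃ - y₂)) < y₃`. -/
theorem tangent_region_eq_Ioo (hy3 : 0 < y₃) (hy : y₁ ^ 2 + y₂ ^ 2 < y₃ ^ 2) :
    {t : ℝ | 0 < t ∧ t < y₃ ∧ 0 < (y₃ - t) ^ 2 - (y₂ - t) ^ 2 - y₁ ^ 2}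
      = Ioo 0 ((y₃ ^ 2 - y₁ ^ 2 - y₂ ^ 2) / (2 * (y₃ - y₂))) := by
  have hc := sub_pos_of_sq_add_sq_lt_sq hy3 hy
  ext t
  simp only [mem_ofPred_eq, mem_Ioo, tangent_quadratic_eq,
    lt_div_iff₀ (by positivity : 0 < 2 * (y₃ - y₂))]
  constructor
  · rintro ⟨ht, -, hq⟩
    exact ⟨ht, by linarith⟩
  · rintro ⟨ht, hq⟩
    exact ⟨ht, by nlinarith [sq_nonneg y₁], by linarith⟩

end TangentCase

/-- The Riesz measure in the tangent case `a = 1`: at a point `y` in the open dual of the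
ice-cream cone,
`∫_{R(y)} dt / (2π√(q₁(t,y))) = √(y₃² − y₁² − y₂²) / (2π (y₃ − y₂))`,
where `q₁(t,y) = (y₃ − t)² − (y₂ − t)² − y₁²` and `R(y) = {t : 0 < t < y₃, q₁(t,y) > 0}`. -/
theorem tangent_line_measure (y₁ y₂ y₃ : ℝ) (hy3 : 0 < y₃)
    (hy : y₁ ^ 2 + y₂ ^ 2 < y₃ ^ 2) :
    ∫ t in {t : ℝ | 0 < t ∧ t < y₃ ∧
        0 < (y₃ - t) ^ 2 - (y₂ - t) ^ 2 - y₁ ^ 2},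
        (2 * π * Real.sqrt ((y₃ - t) ^ 2 - (y₂ - t) ^ 2 - y₁ ^ 2))⁻¹
      = Real.sqrt (y₃ ^ 2 - y₁ ^ 2 - y₂ ^ 2) / (2 * π * (y₃ - y₂)) := by
  have hc := sub_pos_of_sq_add_sq_lt_sq hy3 hy
  have hA : 0 ≤ y₃ ^ 2 - y₁ ^ 2 - y₂ ^ 2 := by linarith
  simp_rw [tangent_region_eq_Ioo hy3 hy, tangent_quadratic_eq, mul_inv]
  rw [integral_const_mul, setIntegral_Ioo_inv_sqrt_sub_mul hA (by positivity)]
  field_simp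
end

section
/- Let a > 1 and let y = (y₁, y₂, y₃) ∈ ℝ³ satisfy y₃ > 0, y₃² > y₁² + y₂², and (a·y₃ − y₂)² > (a² − 1)(y₃² − y₂² − y₁²). Set q_a(t, y) = (y₃ − a·t)² − (y₂ − t)² − y₁² and R_a(y) = {t ∈ ℝ : 0 < t < y₃/a and q_a(t, y) > 0}. Then ∫_{R_a(y)} dt / (2π·√(q_a(t, y))) = (1 / (4π·√(a² − 1))) · log( (a·y₃ − y₂ + √((a² − 1)(y₃² − y₁² − y₂²))) / (a·y₃ − y₂ − √((a² − 1)(y₃² − y₁² − y₂²))) ). -/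
open MeasureTheory Real

set_option maxHeartbeats 1000000 in
lemma key_integral (A B C : ℝ) (hA : 0 < A) (hB : 0 < B) (hC : 0 < C)
    (hD : A * C < B ^ 2) :
    ∫ t in Set.Ioo 0 ((B - Real.sqrt (B ^ 2 - A * C)) / A),
        (2 * π * Real.sqrt (A * t ^ 2 - 2 * B * t + C))⁻¹
      = (1 / (4 * π * Real.sqrt A)) *
          Real.log ((B + Real.sqrt (A * C)) / (B - Real.sqrt (A * C))) := by
  have hπ : (0:ℝ) < π := Real.pi_pos
  set sD := Real.sqrt (B ^ 2 - A * C) with hsDdef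
  set sA := Real.sqrt A with hsAdef
  have hsA0 : 0 < sA := Real.sqrt_pos.2 hA
  have hsA2 : sA ^ 2 = A := Real.sq_sqrt hA.le
  have hsD0 : 0 < sD := Real.sqrt_pos.2 (by linarith)
  have hsD2 : sD ^ 2 = B ^ 2 - A * C := Real.sq_sqrt (by linarith)
  have hsDB : sD < B := by nlinarith
  set tm := (B - sD) / A with htmdef
  set tp := (B + sD) / A with htpdef
  have htm0 : 0 < tm := div_pos (by linarith) hA
  have htmtp : tm < tp := (div_lt_div_iff_of_pos_right hA).2 (by linarith)
  -- factorization of the quadratic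
  have hfac : ∀ t : ℝ, A * t ^ 2 - 2 * B * t + C = A * (tm - t) * (tp - t) := by
    intro t
    rw [htmdef, htpdef]
    field_simp
    nlinarith [hsD2]
  have hBAtm : B - A * tm = sD := by
    rw [htmdef]; field_simp; ring
  have hqtm : A * tm ^ 2 - 2 * B * tm + C = 0 := by
    rw [hfac]; ring
  -- positivity of the quadratic on (0, tm)
  have hqpos : ∀ x ∈ Set.Ioo (0:ℝ) tm, 0 < A * x ^ 2 - 2 * B * x + C := by
    intro x hx
    rw [hfac]
    have : 0 < tm - x := by linarith [hx.2]
    have : 0 < tp - x := by linarith [hx.2, htmtp]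
    positivity
  -- the antiderivative
  set F : ℝ → ℝ := fun t =>
    -(1 / (2 * π * sA)) * Real.log (B - A * t + sA * Real.sqrt (A * t ^ 2 - 2 * B * t + C))
    with hFdef
  have hargpos : ∀ x ∈ Set.Icc (0:ℝ) tm,
      0 < B - A * x + sA * Real.sqrt (A * x ^ 2 - 2 * B * x + C) := by
    intro x hx
    have h1 : A * x ≤ A * tm := by
      have := hx.2; nlinarith
    have h2 : 0 ≤ sA * Real.sqrt (A * x ^ 2 - 2 * B * x + C) := by positivity
    have : sD ≤ B - A * x := by rw [← hBAtm]; linarith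
    linarith
  have hcont : ContinuousOn F (Set.Icc 0 tm) := by
    apply ContinuousOn.mul continuousOn_const
    apply ContinuousOn.log
    · fun_prop
    · intro x hx; exact (hargpos x hx).ne'
  have hderiv : ∀ x ∈ Set.Ioo (0:ℝ) tm,
      HasDerivAt F ((2 * π * Real.sqrt (A * x ^ 2 - 2 * B * x + C))⁻¹) x := by
    intro x hx
    have hqx : 0 < A * x ^ 2 - 2 * B * x + C := hqpos x hx
    have hsq : 0 < Real.sqrt (A * x ^ 2 - 2 * B * x + C) := Real.sqrt_pos.2 hqx
    have hsq2 : Real.sqrt (A * x ^ 2 - 2 * B * x + C) ^ 2 = A * x ^ 2 - 2 * B * x + C :=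
      Real.sq_sqrt hqx.le
    have harg : 0 < B - A * x + sA * Real.sqrt (A * x ^ 2 - 2 * B * x + C) :=
      hargpos x ⟨hx.1.le, hx.2.le⟩
    have h1 : HasDerivAt (fun t : ℝ => A * t ^ 2 - 2 * B * t + C) (2 * A * x - 2 * B) x := by
      have ha : HasDerivAt (fun t : ℝ => A * t ^ 2) (A * (2 * x)) x := by
        simpa using (hasDerivAt_pow 2 x).const_mul A
      have hb : HasDerivAt (fun t : ℝ => 2 * B * t) (2 * B) x := by
        simpa using (hasDerivAt_id x).const_mul (2 * B)
      have := (ha.sub hb).add_const C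
      exact this.congr_deriv (by ring)
    have h2 := h1.sqrt hqx.ne'
    have h3 : HasDerivAt
        (fun t : ℝ => B - A * t + sA * Real.sqrt (A * t ^ 2 - 2 * B * t + C))
        (-A + sA * ((2 * A * x - 2 * B) / (2 * Real.sqrt (A * x ^ 2 - 2 * B * x + C)))) x := by
      have ha : HasDerivAt (fun t : ℝ => B - A * t) (-A) x := by
        simpa using ((hasDerivAt_id x).const_mul A).const_sub B
      exact ha.add (h2.const_mul sA)
    have h4 := (h3.log harg.ne').const_mul (-(1 / (2 * π * sA)))
    refine h4.congr_deriv (Eq.symm ?_)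
    rw [eq_comm]
    generalize Real.sqrt (A * x ^ 2 - 2 * B * x + C) = S at hsq harg ⊢
    rw [← hsA2] at harg ⊢
    field_simp
    ring
  have hint : IntervalIntegrable (fun t => (2 * π * Real.sqrt (A * t ^ 2 - 2 * B * t + C))⁻¹)
      volume 0 tm := by
    have hg0 : IntervalIntegrable (fun t : ℝ => t ^ (-(1/2) : ℝ)) volume (tm - tm) (tm - 0) :=
      intervalIntegral.intervalIntegrable_rpow' (by norm_num)
    have hg1 : IntervalIntegrable (fun t : ℝ => (tm - t) ^ (-(1/2) : ℝ)) volume 0 tm := by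
      simpa using (hg0.comp_sub_left tm).symm
    have hg : IntervalIntegrable
        (fun t : ℝ => (2 * π * Real.sqrt (A * (tp - tm)))⁻¹ * (tm - t) ^ (-(1/2) : ℝ))
        volume 0 tm := hg1.const_mul _
    apply hg.mono_fun
    · apply Measurable.aestronglyMeasurable
      apply Measurable.inv
      fun_prop
    · rw [Set.uIoc_of_le htm0.le]
      filter_upwards [ae_restrict_mem measurableSet_Ioc] with t ht
      have ht0 : 0 < t := ht.1
      have httm : t ≤ tm := ht.2
      have htmt : 0 ≤ tm - t := by linarith
      have hAtp : 0 < A * (tp - tm) := by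
        have : 0 < tp - tm := by linarith
        positivity
      have hrw : (tm - t) ^ (-(1/2) : ℝ) = (Real.sqrt (tm - t))⁻¹ := by
        rw [Real.rpow_neg htmt, Real.sqrt_eq_rpow]
      have hqge : A * (tp - tm) * (tm - t) ≤ A * t ^ 2 - 2 * B * t + C := by
        rw [hfac]
        nlinarith [mul_nonneg hA.le (sq_nonneg (tm - t))]
      have hqnn : 0 ≤ A * t ^ 2 - 2 * B * t + C := le_trans (by positivity) hqge
      have hs1 : Real.sqrt (A * (tp - tm)) * Real.sqrt (tm - t)
          ≤ Real.sqrt (A * t ^ 2 - 2 * B * t + C) := by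
        rw [← Real.sqrt_mul hAtp.le]
        exact Real.sqrt_le_sqrt hqge
      rw [Real.norm_eq_abs, Real.norm_eq_abs, hrw]
      rw [abs_of_nonneg (by positivity), abs_of_nonneg (by positivity)]
      rcases eq_or_lt_of_le htmt with h | h
      · have htq : t = tm := by linarith
        subst htq
        rw [hqtm, Real.sqrt_zero, mul_zero, inv_zero, sub_self, Real.sqrt_zero, inv_zero,
          mul_zero]
      · rw [← mul_inv]
        apply inv_anti₀
        · have : 0 < Real.sqrt (tm - t) := Real.sqrt_pos.2 h
          positivity
        · calc 2 * π * Real.sqrt (A * (tp - tm)) * Real.sqrt (tm - t)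
              = 2 * π * (Real.sqrt (A * (tp - tm)) * Real.sqrt (tm - t)) := by ring
            _ ≤ 2 * π * Real.sqrt (A * t ^ 2 - 2 * B * t + C) := by
                apply mul_le_mul_of_nonneg_left hs1 (by positivity)
  -- apply FTC
  have hFTC : ∫ t in (0:ℝ)..tm, (2 * π * Real.sqrt (A * t ^ 2 - 2 * B * t + C))⁻¹
      = F tm - F 0 := by
    apply intervalIntegral.integral_eq_sub_of_hasDeriv_right_of_le htm0.le hcont
      (fun x hx => (hderiv x hx).hasDerivWithinAt) hint
  have hIoo : ∫ t in Set.Ioo 0 tm, (2 * π * Real.sqrt (A * t ^ 2 - 2 * B * t + C))⁻¹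
      = ∫ t in (0:ℝ)..tm, (2 * π * Real.sqrt (A * t ^ 2 - 2 * B * t + C))⁻¹ := by
    rw [intervalIntegral.integral_of_le htm0.le, MeasureTheory.integral_Ioc_eq_integral_Ioo]
  rw [hIoo, hFTC, hFdef]
  -- evaluate F at the endpoints
  have hFtm : F tm = -(1 / (2 * π * sA)) * Real.log sD := by
    rw [hFdef]
    simp only
    rw [hqtm, Real.sqrt_zero, mul_zero, add_zero, hBAtm]
  have hF0 : F 0 = -(1 / (2 * π * sA)) * Real.log (B + sA * Real.sqrt C) := by
    rw [hFdef]
    norm_num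
  rw [← hFdef, hFtm, hF0]
  have hsC : Real.sqrt (A * C) = sA * Real.sqrt C := Real.sqrt_mul hA.le C
  set s := Real.sqrt (A * C) with hsdef
  have hs0 : 0 ≤ s := Real.sqrt_nonneg _
  have hs2 : s ^ 2 = A * C := Real.sq_sqrt (by positivity)
  have hsB : s < B := by nlinarith
  have hBs : 0 < B + sA * Real.sqrt C := by
    rw [← hsC]; linarith
  have hratio : (B + s) / (B - s) = ((B + sA * Real.sqrt C) / sD) ^ 2 := by
    rw [← hsC, div_pow, div_eq_div_iff (sub_pos.2 hsB).ne' (pow_ne_zero 2 hsD0.ne')]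
    linear_combination (B + s) * hsD2 + (B + s) * hs2
  rw [hratio, Real.log_pow, Real.log_div hBs.ne' hsD0.ne']
  push_cast
  field_simp
  ring

set_option maxHeartbeats 1000000 in
/-- The Riesz measure in the case `a > 1` (line meeting the conic in two complex points):
at a point `y` in the open dual of the ice-cream cone away from the logarithmic
singularity,
`∫_{R_a(y)} dt / (2π√(q_a(t,y)))
  = (1/(4π√(a²−1))) log((a y₃ − y₂ + √((a²−1)(y₃²−y₁²−y₂²)))/(a y₃ − y₂ − √((a²−1)(y₃²−y₁²−y₂²))))`,
where `q_a(t,y) = (y₃ − a t)² − (y₂ − t)² − y₁²` and `R_a(y) = {t : 0 < t < y₃/a, q_a(t,y) > 0}`. -/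
theorem complex_intersection_measure (a : ℝ) (ha : 1 < a)
    (y₁ y₂ y₃ : ℝ) (hy3 : 0 < y₃) (hy : y₁ ^ 2 + y₂ ^ 2 < y₃ ^ 2)
    (hsing : (a ^ 2 - 1) * (y₃ ^ 2 - y₂ ^ 2 - y₁ ^ 2) < (a * y₃ - y₂) ^ 2) :
    ∫ t in {t : ℝ | 0 < t ∧ t < y₃ / a ∧
        0 < (y₃ - a * t) ^ 2 - (y₂ - t) ^ 2 - y₁ ^ 2},
        (2 * π * Real.sqrt ((y₃ - a * t) ^ 2 - (y₂ - t) ^ 2 - y₁ ^ 2))⁻¹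
      = (1 / (4 * π * Real.sqrt (a ^ 2 - 1))) *
          Real.log ((a * y₃ - y₂ + Real.sqrt ((a ^ 2 - 1) * (y₃ ^ 2 - y₁ ^ 2 - y₂ ^ 2))) /
            (a * y₃ - y₂ - Real.sqrt ((a ^ 2 - 1) * (y₃ ^ 2 - y₁ ^ 2 - y₂ ^ 2)))) := by
  have hπ : (0:ℝ) < π := Real.pi_pos
  have ha0 : (0:ℝ) < a := by linarith
  set A := a ^ 2 - 1 with hAdef
  set B := a * y₃ - y₂ with hBdef
  set C := y₃ ^ 2 - y₂ ^ 2 - y₁ ^ 2 with hCdef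
  have hA : 0 < A := by rw [hAdef]; nlinarith
  have hC : 0 < C := by rw [hCdef]; linarith
  have hB : 0 < B := by rw [hBdef]; nlinarith [sq_nonneg y₁, sq_nonneg (y₃ - y₂)]
  have hD : A * C < B ^ 2 := hsing
  set sD := Real.sqrt (B ^ 2 - A * C) with hsDdef
  have hsD0 : 0 < sD := Real.sqrt_pos.2 (by linarith)
  have hsD2 : sD ^ 2 = B ^ 2 - A * C := Real.sq_sqrt (by linarith)
  have hsDB : sD < B := by nlinarith
  set tm := (B - sD) / A with htmdef
  set tp := (B + sD) / A with htpdef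
  have htm0 : 0 < tm := div_pos (by linarith) hA
  have htmtp : tm < tp := by
    rw [htmdef, htpdef]
    apply div_lt_div_of_pos_right (by linarith) hA
  have hfac : ∀ t : ℝ, A * t ^ 2 - 2 * B * t + C = A * (tm - t) * (tp - t) := by
    intro t
    rw [htmdef, htpdef]
    field_simp
    nlinarith [hsD2]
  have hexp : B ^ 2 - A * C = (a * y₂ - y₃) ^ 2 + (a ^ 2 - 1) * y₁ ^ 2 := by
    rw [hAdef, hBdef, hCdef]; ring
  have hkey : 0 < (a * y₂ - y₃) ^ 2 + a ^ 2 * y₁ ^ 2 := by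
    nlinarith [hexp, hD, sq_nonneg y₁]
  have hqx : A * (y₃ / a) ^ 2 - 2 * B * (y₃ / a) + C < 0 := by
    have h : A * (y₃ / a) ^ 2 - 2 * B * (y₃ / a) + C
        = -(((a * y₂ - y₃) ^ 2 + a ^ 2 * y₁ ^ 2) / a ^ 2) := by
      rw [hAdef, hBdef, hCdef]; field_simp; ring
    rw [h]
    simp only [neg_neg, Left.neg_neg_iff]
    positivity
  have hprod : A * (tm - y₃ / a) * (tp - y₃ / a) < 0 := by rw [← hfac]; exact hqx
  have hxtm : tm < y₃ / a := by
    by_contra hcon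
    push_neg at hcon
    have h1 : 0 ≤ tm - y₃ / a := by linarith
    have h2 : 0 ≤ tp - y₃ / a := by linarith
    have := mul_nonneg (mul_nonneg hA.le h1) h2
    linarith
  have hxtp : y₃ / a < tp := by
    by_contra hcon
    push_neg at hcon
    have h1 : tm - y₃ / a ≤ 0 := by linarith
    have h2 : tp - y₃ / a ≤ 0 := by linarith
    have h3 : A * (tm - y₃ / a) ≤ 0 := mul_nonpos_of_nonneg_of_nonpos hA.le h1
    nlinarith
  have hset : {t : ℝ | 0 < t ∧ t < y₃ / a ∧
      0 < (y₃ - a * t) ^ 2 - (y₂ - t) ^ 2 - y₁ ^ 2} = Set.Ioo 0 tm := by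
    ext t
    simp only [Set.mem_setOf_eq, Set.mem_Ioo]
    have hqt : (y₃ - a * t) ^ 2 - (y₂ - t) ^ 2 - y₁ ^ 2 = A * t ^ 2 - 2 * B * t + C := by
      rw [hAdef, hBdef, hCdef]; ring
    rw [hqt, hfac t]
    constructor
    · rintro ⟨h0, hlt, hq⟩
      refine ⟨h0, ?_⟩
      by_contra hcon
      push_neg at hcon
      have h1 : tm - t ≤ 0 := by linarith
      have h2 : 0 ≤ tp - t := by linarith
      have h3 : A * (tm - t) ≤ 0 := mul_nonpos_of_nonneg_of_nonpos hA.le h1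
      nlinarith
    · rintro ⟨h0, hlt⟩
      refine ⟨h0, by linarith, ?_⟩
      have h1 : 0 < tm - t := by linarith
      have h2 : 0 < tp - t := by linarith
      positivity
  rw [hset]
  have hqeq : ∀ t : ℝ, (y₃ - a * t) ^ 2 - (y₂ - t) ^ 2 - y₁ ^ 2
      = A * t ^ 2 - 2 * B * t + C := by
    intro t; rw [hAdef, hBdef, hCdef]; ring
  simp only [hqeq]
  have hCC : A * (y₃ ^ 2 - y₁ ^ 2 - y₂ ^ 2) = A * C := by rw [hCdef]; ring
  rw [hCC, htmdef, hsDdef, key_integral A B C hA hB hC hD]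
end
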